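/- Let H be a complex Hilbert space and e ∈ K(H) a partial isometry such that there exists a nonzero rank-one partial isometry orthogonal to e. Then the closed unit ball of the corner e e* K(H) e* e equals the set of x in the closed unit ball of K(H) such that ‖x − v‖ ≤ 1 for every rank-one partial isometry v ∈ K(H) orthogonal to e. -/

import Mathlib

/-!
If `x` lies in the corner, then `x` vanishes on `ker e`, an orthogonal rank-one partial isometry
`v = ⟪ξ, ·⟫ η` (Mathlib's `rankOne ℂ η ξ`) vanishes on `(ker e)ᗮ` (as `ξ ∈ ker e`), and the
ranges of `x` and `v` are orthogonal (as `η ∈ ker e*`); hence `‖x - v‖ ≤ max ‖x‖ ‖v‖ ≤ 1`.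

Conversely, by the parallelogram law, `‖a - η‖ ≤ 1` and `‖a + η‖ ≤ 1` with `‖η‖ = 1` force `a = 0`.
Testing `x` against `±⟪ξ, ·⟫ η₀` for unit vectors `ξ ∈ ker e`, where `⟪ξ₀, ·⟫ η₀` is a rank-one
partial isometry orthogonal to `e`, shows `ker e ≤ ker x`; testing `x*` against `±⟪η, ·⟫ ξ₀` for
unit vectors `η ∈ ker e*` shows `ker e* ≤ ker x*`. For a partial isometry `e` these two inclusions
give `x = e e* x e* e`.
-/

open ContinuousLinearMap

variable {H : Type*} [NormedAddCommGroup H] [InnerProductSpace ℂ H] [CompleteSpace H]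

def IsRankOnePartialIsometry (v : H →L[ℂ] H) : Prop :=
  ∃ ξ η : H, ‖ξ‖ = 1 ∧ ‖η‖ = 1 ∧ v = (innerSL ℂ ξ).smulRight η

open InnerProductSpace

section InnerProductSpace

variable {𝕜 E F G : Type*} [RCLike 𝕜] [NormedAddCommGroup E] [InnerProductSpace 𝕜 E]
  [NormedAddCommGroup F] [InnerProductSpace 𝕜 F] [NormedAddCommGroup G] [InnerProductSpace 𝕜 G]

include 𝕜 in
theorem eq_zero_of_norm_sub_le_of_norm_add_le {a b : E} {r : ℝ} (hb : ‖b‖ = r)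
    (hsub : ‖a - b‖ ≤ r) (hadd : ‖a + b‖ ≤ r) : a = 0 := by
  have hpar := parallelogram_law_with_norm 𝕜 a b
  have hr : 0 ≤ r := hb ▸ norm_nonneg b
  have : ‖a‖ ^ 2 ≤ 0 := by
    nlinarith [pow_le_pow_left₀ (norm_nonneg _) hsub 2, pow_le_pow_left₀ (norm_nonneg _) hadd 2]
  exact norm_eq_zero.1 (pow_eq_zero_iff two_ne_zero |>.1 (le_antisymm this (sq_nonneg _)))

theorem norm_add_le_max_of_orthogonal (K : Submodule 𝕜 E) [K.HasOrthogonalProjection]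
    {a b : E →L[𝕜] F} (ha : K ≤ a.ker) (hb : Kᗮ ≤ b.ker)
    (hab : ∀ u w, inner 𝕜 (a u) (b w) = 0) : ‖a + b‖ ≤ max ‖a‖ ‖b‖ := by
  refine opNorm_le_bound _ (le_max_of_le_left (norm_nonneg a)) fun u => ?_
  set M := max ‖a‖ ‖b‖
  have hsplit := K.starProjection_add_starProjection_orthogonal u
  have hau : a u = a (Kᗮ.starProjection u) := by
    conv_lhs => rw [← hsplit]
    rw [map_add, show a (K.starProjection u) = 0 from ha (K.starProjection_apply_mem u), zero_add]
  have hbu : b u = b (K.starProjection u) := by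
    conv_lhs => rw [← hsplit]
    rw [map_add, show b (Kᗮ.starProjection u) = 0 from hb (Kᗮ.starProjection_apply_mem u),
      add_zero]
  have hsq : ‖(a + b) u‖ ^ 2 ≤ (M * ‖u‖) ^ 2 :=
    calc ‖(a + b) u‖ ^ 2 = ‖a u‖ ^ 2 + ‖b u‖ ^ 2 := by
          simp only [add_apply, sq]
          exact norm_add_sq_eq_norm_sq_add_norm_sq_of_inner_eq_zero _ _ (hab u u)
      _ ≤ (M * ‖Kᗮ.starProjection u‖) ^ 2 + (M * ‖K.starProjection u‖) ^ 2 := by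
          rw [hau, hbu]
          gcongr
          · exact (le_opNorm _ _).trans (by gcongr; exact le_max_left _ _)
          · exact (le_opNorm _ _).trans (by gcongr; exact le_max_right _ _)
      _ = (M * ‖u‖) ^ 2 := by
          rw [mul_pow M ‖u‖, K.norm_sq_eq_add_norm_sq_starProjection u]; ring
  exact (sq_le_sq₀ (norm_nonneg _) (by positivity)).1 hsq

theorem rankOne_comp_eq_zero_iff [CompleteSpace E] [CompleteSpace G] {η : F} (hη : η ≠ 0)
    (ξ : E) (f : G →L[𝕜] E) : rankOne 𝕜 η ξ ∘L f = 0 ↔ adjoint f ξ = 0 := by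
  simp [rankOne_comp, hη]

theorem comp_rankOne_eq_zero_iff {ξ : E} (hξ : ξ ≠ 0) (η : F) (f : F →L[𝕜] G) :
    f ∘L rankOne 𝕜 η ξ = 0 ↔ f η = 0 := by
  simp [comp_rankOne, hξ]

theorem ker_le_ker_of_norm_sub_rankOne_le {K : Submodule 𝕜 E} {x : E →L[𝕜] F} {η : F}
    (hη : ‖η‖ = 1)
    (h : ∀ ξ ∈ K, ‖ξ‖ = 1 → ‖x - rankOne 𝕜 η ξ‖ ≤ 1 ∧ ‖x + rankOne 𝕜 η ξ‖ ≤ 1) :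
    K ≤ x.ker := by
  have hunit : ∀ ξ ∈ K, ‖ξ‖ = 1 → x ξ = 0 := by
    intro ξ hξK hξ
    have hrankOne : rankOne 𝕜 η ξ ξ = η := by
      simp [inner_self_eq_norm_sq_to_K, hξ]
    obtain ⟨hsub, hadd⟩ := h ξ hξK hξ
    refine eq_zero_of_norm_sub_le_of_norm_add_le (𝕜 := 𝕜) hη ?_ ?_
    · simpa [hξ, hrankOne] using (x - rankOne 𝕜 η ξ).le_of_opNorm_le hsub ξ
    · simpa [hξ, hrankOne] using (x + rankOne 𝕜 η ξ).le_of_opNorm_le hadd ξ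
  intro ζ hζK
  rcases eq_or_ne ζ 0 with rfl | hζ
  · exact x.ker.zero_mem
  have hnormalized := hunit _ (K.smul_mem (‖ζ‖⁻¹ : 𝕜) hζK) (norm_smul_inv_norm hζ)
  rw [map_smul, smul_eq_zero] at hnormalized
  exact hnormalized.resolve_left (by simpa using hζ)

end InnerProductSpace

section PartialIsometry

variable {𝕜 E F : Type*} [RCLike 𝕜] [NormedAddCommGroup E] [InnerProductSpace 𝕜 E]
  [CompleteSpace E] [NormedAddCommGroup F] [InnerProductSpace 𝕜 F] {e : E →L[𝕜] E}

theorem comp_adjoint_comp_self_eq_of_ker_le (he : e ∘L adjoint e ∘L e = e) {x : E →L[𝕜] F}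
    (hx : e.ker ≤ x.ker) : x ∘L (adjoint e ∘L e) = x := by
  ext u
  have hu : u - adjoint e (e u) ∈ e.ker := by
    simpa [sub_eq_zero] using (congrArg (· u) he).symm
  exact (sub_eq_zero.1 (by simpa using hx hu)).symm

theorem corner_eq_self_of_ker_le (he : e ∘L adjoint e ∘L e = e) {x : E →L[𝕜] E}
    (hker : e.ker ≤ x.ker) (hker_adjoint : (adjoint e).ker ≤ (adjoint x).ker) :
    (e ∘L adjoint e) ∘L x ∘L (adjoint e ∘L e) = x := by
  have he_adjoint : adjoint e ∘L adjoint (adjoint e) ∘L adjoint e = adjoint e := by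
    simpa [adjoint_comp, comp_assoc] using congrArg adjoint he
  have hleft := congrArg adjoint (comp_adjoint_comp_self_eq_of_ker_le he_adjoint hker_adjoint)
  simp only [adjoint_comp, adjoint_adjoint] at hleft
  rw [comp_adjoint_comp_self_eq_of_ker_le he hker, hleft]

theorem norm_sub_rankOne_le_one_of_corner_eq_self {x : E →L[𝕜] E}
    (hcorner : (e ∘L adjoint e) ∘L x ∘L (adjoint e ∘L e) = x) (hx : ‖x‖ ≤ 1)
    {ξ η : E} (hξ : ‖ξ‖ = 1) (hη : ‖η‖ = 1) (heξ : e ξ = 0) (heη : adjoint e η = 0) :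
    ‖x - rankOne 𝕜 η ξ‖ ≤ 1 := by
  have hker : e.ker ≤ x.ker := fun u hu => by
    rw [← hcorner]; simp [show e u = 0 from hu]
  have hker_rankOne : e.kerᗮ ≤ (-rankOne 𝕜 η ξ).ker := fun u hu => by
    simp [Submodule.inner_right_of_mem_orthogonal heξ hu]
  have horth : ∀ u w, inner 𝕜 (x u) ((-rankOne 𝕜 η ξ) w) = 0 := fun u w => by
    rw [← hcorner]
    simp [inner_smul_right, ← adjoint_inner_right, heη]
  calc ‖x - rankOne 𝕜 η ξ‖ ≤ max ‖x‖ ‖-rankOne 𝕜 η ξ‖ :=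
        sub_eq_add_neg x _ ▸ norm_add_le_max_of_orthogonal e.ker hker hker_rankOne horth
    _ ≤ 1 := by simp [hx, hξ, hη]

theorem corner_eq_self_of_forall_norm_sub_rankOne_le (he : e ∘L adjoint e ∘L e = e)
    {ξ₀ η₀ : E} (hξ₀ : ‖ξ₀‖ = 1) (hη₀ : ‖η₀‖ = 1) (heξ₀ : e ξ₀ = 0) (heη₀ : adjoint e η₀ = 0)
    {x : E →L[𝕜] E} (hx : ∀ ξ η, ‖ξ‖ = 1 → ‖η‖ = 1 → e ξ = 0 → adjoint e η = 0 →
      ‖x - rankOne 𝕜 η ξ‖ ≤ 1) :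
    (e ∘L adjoint e) ∘L x ∘L (adjoint e ∘L e) = x := by
  have hx_neg : ∀ ξ η, ‖ξ‖ = 1 → ‖η‖ = 1 → e ξ = 0 → adjoint e η = 0 →
      ‖x + rankOne 𝕜 η ξ‖ ≤ 1 := fun ξ η hξ hη heξ heη => by
    simpa using hx ξ (-η) hξ (by simpa using hη) heξ (by simp [heη])
  have hnorm_adjoint : ∀ ξ η, ‖adjoint x - rankOne 𝕜 ξ η‖ = ‖x - rankOne 𝕜 η ξ‖ ∧
      ‖adjoint x + rankOne 𝕜 ξ η‖ = ‖x + rankOne 𝕜 η ξ‖ := fun ξ η => by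
    rw [← adjoint_rankOne, ← map_sub, ← map_add, adjoint.norm_map, adjoint.norm_map]
    exact ⟨rfl, rfl⟩
  refine corner_eq_self_of_ker_le he ?_ ?_
  · exact ker_le_ker_of_norm_sub_rankOne_le hη₀ fun ξ heξ hξ =>
      ⟨hx ξ η₀ hξ hη₀ heξ heη₀, hx_neg ξ η₀ hξ hη₀ heξ heη₀⟩
  · refine ker_le_ker_of_norm_sub_rankOne_le hξ₀ fun η heη hη => ?_
    rw [(hnorm_adjoint ξ₀ η).1, (hnorm_adjoint ξ₀ η).2]
    exact ⟨hx ξ₀ η hξ₀ hη heξ₀ heη, hx_neg ξ₀ η hξ₀ hη heξ₀ heη⟩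

end PartialIsometry

theorem isRankOnePartialIsometry_and_orthogonal_iff (e v : H →L[ℂ] H) :
    (IsRankOnePartialIsometry v ∧ v ∘L adjoint e = 0 ∧ adjoint e ∘L v = 0) ↔
      ∃ ξ η : H, ‖ξ‖ = 1 ∧ ‖η‖ = 1 ∧ e ξ = 0 ∧ adjoint e η = 0 ∧ v = rankOne ℂ η ξ := by
  constructor
  · rintro ⟨⟨ξ, η, hξ, hη, rfl⟩, hve, hev⟩
    have hξ0 : ξ ≠ 0 := ne_zero_of_norm_ne_zero (hξ ▸ one_ne_zero)
    have hη0 : η ≠ 0 := ne_zero_of_norm_ne_zero (hη ▸ one_ne_zero)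
    rw [← rankOne_def, rankOne_comp_eq_zero_iff hη0, adjoint_adjoint] at hve
    rw [← rankOne_def, comp_rankOne_eq_zero_iff hξ0] at hev
    exact ⟨ξ, η, hξ, hη, hve, hev, rfl⟩
  · rintro ⟨ξ, η, hξ, hη, heξ, heη, rfl⟩
    have hξ0 : ξ ≠ 0 := ne_zero_of_norm_ne_zero (hξ ▸ one_ne_zero)
    have hη0 : η ≠ 0 := ne_zero_of_norm_ne_zero (hη ▸ one_ne_zero)
    rw [rankOne_comp_eq_zero_iff hη0, adjoint_adjoint, comp_rankOne_eq_zero_iff hξ0]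
    exact ⟨⟨ξ, η, hξ, hη, rfl⟩, heξ, heη⟩

theorem stmt5_general (e : H →L[ℂ] H)
    (hpe : e ∘L adjoint e ∘L e = e)
    (hex : ∃ v : H →L[ℂ] H, IsRankOnePartialIsometry v ∧
      v ∘L adjoint e = 0 ∧ adjoint e ∘L v = 0) :
    {x : H →L[ℂ] H | IsCompactOperator (⇑x) ∧ ‖x‖ ≤ 1 ∧
        (e ∘L adjoint e) ∘L x ∘L (adjoint e ∘L e) = x} =
      {x : H →L[ℂ] H | IsCompactOperator (⇑x) ∧ ‖x‖ ≤ 1 ∧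
        ∀ v : H →L[ℂ] H, IsRankOnePartialIsometry v →
          v ∘L adjoint e = 0 → adjoint e ∘L v = 0 → ‖x - v‖ ≤ 1} := by
  obtain ⟨v₀, hv₀⟩ := hex
  obtain ⟨ξ₀, η₀, hξ₀, hη₀, heξ₀, heη₀, -⟩ :=
    (isRankOnePartialIsometry_and_orthogonal_iff e v₀).1 hv₀
  refine Set.ext fun x => and_congr_right fun _ => and_congr_right fun hx => ⟨?_, ?_⟩
  · intro hcorner v hv hve hev
    obtain ⟨ξ, η, hξ, hη, heξ, heη, rfl⟩ :=
      (isRankOnePartialIsometry_and_orthogonal_iff e v).1 ⟨hv, hve, hev⟩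
    exact norm_sub_rankOne_le_one_of_corner_eq_self hcorner hx hξ hη heξ heη
  · refine fun h => corner_eq_self_of_forall_norm_sub_rankOne_le hpe hξ₀ hη₀ heξ₀ heη₀ ?_
    intro ξ η hξ hη heξ heη
    obtain ⟨hv, hve, hev⟩ :=
      (isRankOnePartialIsometry_and_orthogonal_iff e _).2 ⟨ξ, η, hξ, hη, heξ, heη, rfl⟩
    exact h _ hv hve hev

/-- If `e` is a compact partial isometry admitting some rank-one partial isometry
orthogonal to it, then the closed unit ball of the corner `e e* K(H) e* e` is exactly the
set of compact contractions `x` with `‖x - v‖ ≤ 1` for every rank-one partial isometry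
`v` orthogonal to `e`. -/
theorem stmt5 (e : H →L[ℂ] H)
    (hec : IsCompactOperator (⇑e)) (hpe : e ∘L adjoint e ∘L e = e)
    (hex : ∃ v : H →L[ℂ] H, IsRankOnePartialIsometry v ∧
      v ∘L adjoint e = 0 ∧ adjoint e ∘L v = 0) :
    {x : H →L[ℂ] H | IsCompactOperator (⇑x) ∧ ‖x‖ ≤ 1 ∧
        (e ∘L adjoint e) ∘L x ∘L (adjoint e ∘L e) = x} =
      {x : H →L[ℂ] H | IsCompactOperator (⇑x) ∧ ‖x‖ ≤ 1 ∧
        ∀ v : H →L[ℂ] H, IsRankOnePartialIsometry v →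
          v ∘L adjoint e = 0 → adjoint e ∘L v = 0 → ‖x - v‖ ≤ 1} :=
  stmt5_general e hpe hex
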